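/- For subsets of [n] of fixed size m ordered by elementwise dominance of sorted lists, the single-column rank function S ↦ Σ_{i ∈ S} #{k ≤ i : k ∉ S} is strictly monotone: R ≤ S and R ≠ S imply rank((R)) < rank((S)), and moreover rank is surjective onto {0, 1, ..., rank((S))} on the lower set of S: for every 0 ≤ t ≤ rank((S)) there exists R ≤ S with rank((R)) = t. -/

import Mathlib

/-!
Write a column `S ⊆ {1, 2, …}` as `s₀ < s₁ < ⋯ < s_{m-1}`. Exactly `k + 1` elements of `S` lie
in `[1, s_k]`, so the `k`-th summand of the rank is `s_k - (k + 1)`, a subtraction that never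
truncates; since dominance is the pointwise order on the `s_k`, the rank is strictly monotone.
If the rank is positive, some `a ∈ S` with `a ≥ 2` has `a - 1 ∉ S`, and replacing `a` by `a - 1`
lowers one `s_k` by one: this yields `R ≤ S` of rank one less, and induction reaches every
smaller value.
-/

open Finset

/-- `colLE R S`: `R ≤ S` for columns, i.e. `|R| = |S|` and the `k`-th least element of `R`
does not exceed the `k`-th least element of `S` for each `k`. -/
def colLE {α : Type*} [LinearOrder α] (R S : Finset α) : Prop :=
  R.card = S.card ∧
  ∀ (k : ℕ) (hR : k < (R.sort (· ≤ ·)).length) (hS : k < (S.sort (· ≤ ·)).length),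
    (R.sort (· ≤ ·)).get ⟨k, hR⟩ ≤ (S.sort (· ≤ ·)).get ⟨k, hS⟩

/-- Rank of a single column `S ⊆ [n] = {1,…,n}`:
`Σ_{i ∈ S} #{k : 1 ≤ k ≤ i, k ∉ S}`. -/
def colRank (S : Finset ℕ) : ℕ :=
  ∑ i ∈ S, ((Finset.Icc 1 i).filter (fun k => k ∉ S)).card

namespace Finset

variable {α : Type*} [LinearOrder α] {s : Finset α} {m : ℕ}

theorem filter_le_orderEmbOfFin (h : s.card = m) (i : Fin m) :
    {x ∈ s | x ≤ s.orderEmbOfFin h i} = (Iic i).map (s.orderEmbOfFin h).toEmbedding := by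
  ext x
  constructor
  · intro hx
    obtain ⟨hxs, hxi⟩ := mem_filter.1 hx
    obtain ⟨j, rfl⟩ : x ∈ Set.range (s.orderEmbOfFin h) := by simpa using hxs
    simpa using hxi
  · simp only [mem_map, mem_Iic]
    rintro ⟨j, hj, rfl⟩
    exact mem_filter.2 ⟨orderEmbOfFin_mem s h j, (s.orderEmbOfFin h).monotone hj⟩

theorem card_filter_le_orderEmbOfFin (h : s.card = m) (i : Fin m) :
    #{x ∈ s | x ≤ s.orderEmbOfFin h i} = i + 1 := by
  rw [filter_le_orderEmbOfFin, card_map, Fin.card_Iic]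

end Finset

theorem zero_notMem_of_subset_Icc {s : Finset ℕ} {n : ℕ} (h : s ⊆ Icc 1 n) : 0 ∉ s :=
  fun h0 => by simpa using h h0

theorem succ_le_orderEmbOfFin {s : Finset ℕ} {m : ℕ} (h0 : 0 ∉ s) (h : s.card = m)
    (i : Fin m) :
    i + 1 ≤ s.orderEmbOfFin h i := by
  calc i + 1 = #{x ∈ s | x ≤ s.orderEmbOfFin h i} := (card_filter_le_orderEmbOfFin h i).symm
    _ ≤ #(Icc 1 (s.orderEmbOfFin h i)) := card_le_card fun x hx => by
      obtain ⟨hxs, hxi⟩ := mem_filter.1 hx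
      exact mem_Icc.2 ⟨Nat.one_le_iff_ne_zero.2 (ne_of_mem_of_not_mem hxs h0), hxi⟩
    _ = s.orderEmbOfFin h i := by simp

theorem colLE_iff_orderEmbOfFin {α : Type*} [LinearOrder α] {R S : Finset α} :
    colLE R S ↔ ∃ h : R.card = S.card, ∀ i, R.orderEmbOfFin h i ≤ S.orderEmbOfFin rfl i := by
  refine ⟨fun ⟨h, hle⟩ => ⟨h, fun i => ?_⟩, fun ⟨h, hle⟩ => ⟨h, fun k hR hS => ?_⟩⟩
  · simpa [orderEmbOfFin_apply] using hle i (by simp [h]) (by simp)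
  · simpa [orderEmbOfFin_apply] using hle ⟨k, by simpa using hS⟩

theorem colRank_eq_sum_orderEmbOfFin {S : Finset ℕ} {m : ℕ} (h0 : 0 ∉ S) (h : S.card = m) :
    colRank S = ∑ i : Fin m, (S.orderEmbOfFin h i - (i + 1)) := by
  rw [colRank]
  nth_rw 1 [← map_orderEmbOfFin_univ S h]
  rw [sum_map]
  refine sum_congr rfl fun i _ => ?_
  have hmem :
      {k ∈ Icc 1 (S.orderEmbOfFin h i) | k ∈ S} = {x ∈ S | x ≤ S.orderEmbOfFin h i} := by
    ext x
    simp only [mem_filter, mem_Icc]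
    exact ⟨fun ⟨⟨_, hx⟩, hxS⟩ => ⟨hxS, hx⟩,
      fun ⟨hxS, hx⟩ => ⟨⟨Nat.one_le_iff_ne_zero.2 (ne_of_mem_of_not_mem hxS h0), hx⟩, hxS⟩⟩
  change #{k ∈ Icc 1 (S.orderEmbOfFin h i) | k ∉ S} = _
  rw [filter_not, card_sdiff_of_subset (filter_subset _ _), hmem,
    card_filter_le_orderEmbOfFin, Nat.card_Icc, Nat.add_sub_cancel]

theorem colLE_refl {α : Type*} [LinearOrder α] (S : Finset α) : colLE S S :=
  ⟨rfl, fun _ _ _ => le_rfl⟩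

theorem colLE_trans {α : Type*} [LinearOrder α] {R S T : Finset α} (hRS : colLE R S)
    (hST : colLE S T) : colLE R T := by
  obtain ⟨hRS, hleRS⟩ := hRS
  obtain ⟨hST, hleST⟩ := hST
  refine ⟨hRS.trans hST, fun k hR hT => ?_⟩
  have hS : k < (S.sort (· ≤ ·)).length := by rw [length_sort] at hR ⊢; omega
  exact (hleRS k hR hS).trans (hleST k hS hT)

theorem colRank_lt_of_colLE {R S : Finset ℕ} (hR : 0 ∉ R) (hS : 0 ∉ S) (hle : colLE R S)
    (hne : R ≠ S) : colRank R < colRank S := by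
  obtain ⟨h, hle⟩ := colLE_iff_orderEmbOfFin.1 hle
  obtain ⟨i, hi⟩ : ∃ i, R.orderEmbOfFin h i ≠ S.orderEmbOfFin rfl i := by
    by_contra! heq
    have hrange := range_orderEmbOfFin R h
    rw [show ⇑(R.orderEmbOfFin h) = ⇑(S.orderEmbOfFin rfl) from funext heq,
      range_orderEmbOfFin] at hrange
    exact hne (coe_injective hrange.symm)
  rw [colRank_eq_sum_orderEmbOfFin hR h, colRank_eq_sum_orderEmbOfFin hS rfl]
  refine sum_lt_sum (fun j _ => Nat.sub_le_sub_right (hle j) _) ⟨i, mem_univ i, ?_⟩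
  have := succ_le_orderEmbOfFin hR h i
  have := lt_of_le_of_ne (hle i) hi
  omega

theorem exists_sub_one_notMem_of_colRank_pos {S : Finset ℕ} (hpos : 0 < colRank S) :
    ∃ a ∈ S, a - 1 ∉ S ∧ 2 ≤ a := by
  obtain ⟨i, hiS, hi⟩ := exists_ne_zero_of_sum_ne_zero hpos.ne'
  obtain ⟨k, hk⟩ := card_ne_zero.1 hi
  obtain ⟨hki, hkS⟩ := mem_filter.1 hk
  obtain ⟨hk1, hki⟩ := mem_Icc.1 hki
  have hT : ({x ∈ S | k < x} : Finset ℕ).Nonempty :=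
    ⟨i, mem_filter.2 ⟨hiS, lt_of_le_of_ne hki fun h => hkS (h ▸ hiS)⟩⟩
  set a := ({x ∈ S | k < x} : Finset ℕ).min' hT
  obtain ⟨haS, hka⟩ := mem_filter.1 (min'_mem _ hT)
  refine ⟨a, haS, fun ha1 => ?_, by omega⟩
  rcases eq_or_lt_of_le (Nat.le_sub_one_of_lt hka) with hk | hk
  · exact hkS (hk ▸ ha1)
  · have : a ≤ a - 1 := min'_le _ _ (mem_filter.2 ⟨ha1, hk⟩)
    omega

theorem orderEmbOfFin_insert_sub_one_erase {S : Finset ℕ} {j : Fin S.card} {a : ℕ}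
    (hj : S.orderEmbOfFin rfl j = a) (ha : a - 1 ∉ S)
    (h : (insert (a - 1) (S.erase a)).card = S.card) :
    Function.update (S.orderEmbOfFin rfl) j (a - 1) =
      (insert (a - 1) (S.erase a)).orderEmbOfFin h := by
  set e := S.orderEmbOfFin rfl
  have he : ∀ x, e x ≠ a - 1 := fun x hx => ha (hx ▸ orderEmbOfFin_mem S rfl x)
  refine orderEmbOfFin_unique h (fun x => ?_) fun x y hxy => ?_
  · rcases eq_or_ne x j with rfl | hx
    · simp
    · rw [Function.update_of_ne hx]
      exact mem_insert_of_mem (mem_erase.2 ⟨hj ▸ e.injective.ne hx, orderEmbOfFin_mem S rfl x⟩)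
  · have hexy := e.strictMono hxy
    have := he x
    simp only [Function.update_apply]
    split_ifs with hx hy hy
    · subst hx hy
      exact absurd hxy (lt_irrefl _)
    · subst hx; omega
    · subst hy; omega
    · exact hexy

theorem exists_colLE_colRank_add_one {n : ℕ} {S : Finset ℕ} (hsub : S ⊆ Icc 1 n)
    (hpos : 0 < colRank S) : ∃ R ⊆ Icc 1 n, colLE R S ∧ colRank R + 1 = colRank S := by
  obtain ⟨a, haS, ha1, ha2⟩ := exists_sub_one_notMem_of_colRank_pos hpos
  have haS' := mem_Icc.1 (hsub haS)
  set R := insert (a - 1) (S.erase a)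
  have hRsub : R ⊆ Icc 1 n := by
    intro x hx
    rcases mem_insert.1 hx with rfl | hx
    · exact mem_Icc.2 (by omega)
    · exact hsub (mem_of_mem_erase hx)
  have hcard : R.card = S.card := by
    rw [card_insert_of_notMem fun h => ha1 (mem_of_mem_erase h), card_erase_add_one haS]
  set e := S.orderEmbOfFin rfl
  obtain ⟨j, hj⟩ : a ∈ Set.range e := by simpa [e] using haS
  have hR := orderEmbOfFin_insert_sub_one_erase hj ha1 hcard
  refine ⟨R, hRsub, colLE_iff_orderEmbOfFin.2 ⟨hcard, fun i => ?_⟩, ?_⟩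
  · rw [← hR]
    change Function.update e j (a - 1) i ≤ e i
    rw [Function.update_apply]
    split_ifs with hi
    · subst hi; omega
    · exact le_rfl
  · have hR0 := zero_notMem_of_subset_Icc hRsub
    have hjR := succ_le_orderEmbOfFin hR0 hcard j
    rw [← hR, Function.update_self] at hjR
    have hRrank : colRank R = ∑ i, (Function.update e j (a - 1) i - (i + 1)) := by
      rw [hR]
      exact colRank_eq_sum_orderEmbOfFin hR0 hcard
    have hSrank : colRank S = ∑ i, (e i - (i + 1)) :=
      colRank_eq_sum_orderEmbOfFin (zero_notMem_of_subset_Icc hsub) rfl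
    rw [hRrank, hSrank, ← add_sum_erase _ _ (mem_univ j), ← add_sum_erase _ _ (mem_univ j),
      Function.update_self,
      sum_congr rfl fun i hi => by rw [Function.update_of_ne (ne_of_mem_erase hi)]]
    omega

theorem exists_colLE_colRank_eq {n : ℕ} {S : Finset ℕ} (hsub : S ⊆ Icc 1 n) {t : ℕ}
    (ht : t ≤ colRank S) : ∃ R ⊆ Icc 1 n, colLE R S ∧ colRank R = t := by
  obtain ⟨d, hd⟩ := Nat.exists_eq_add_of_le' ht
  clear ht
  induction d generalizing S with
  | zero => exact ⟨S, hsub, colLE_refl S, by simpa using hd⟩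
  | succ d ih =>
    obtain ⟨S', hS'sub, hS'S, hS'⟩ := exists_colLE_colRank_add_one hsub (by omega)
    obtain ⟨R, hRsub, hRS', hR⟩ := ih hS'sub (by omega)
    exact ⟨R, hRsub, colLE_trans hRS' hS'S, hR⟩

/-- The single-column rank function is strictly monotone on the dominance order, and on
the lower set of `S` it attains every value `t` with `0 ≤ t ≤ rank((S))`. -/
theorem stmt_19 (n : ℕ) (S : Finset ℕ) (hsub : S ⊆ Finset.Icc 1 n) :
    (∀ R : Finset ℕ, R ⊆ Finset.Icc 1 n → colLE R S → R ≠ S →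
      colRank R < colRank S) ∧
    (∀ t ≤ colRank S, ∃ R : Finset ℕ,
      R ⊆ Finset.Icc 1 n ∧ colLE R S ∧ colRank R = t) :=
  ⟨fun _ hRsub hle hne => colRank_lt_of_colLE (zero_notMem_of_subset_Icc hRsub)
      (zero_notMem_of_subset_Icc hsub) hle hne,
    fun _ ht => exists_colLE_colRank_eq hsub ht⟩
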